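/- Let 0 < p < 1, q = 1 - p, and consider the random walk weakly reflected at the origin: S_0 = 0 and S_j = max(S_{j-1} + X_j, 0) for j ≥ 1, with M_n = max_{0≤j≤n} S_j. Then for every real λ with |λ| < 1, the series Σ_{n=1}^∞ λ^n · P{M_n = 1} converges and equals pλ/((1 - qλ)(1 - qλ - pqλ²)). -/

import Mathlib

/-!
On the event `M_n ≤ 1` the walk lives in `{0, 1}`. Splitting it by the final position, the
probabilities `a_n` (end at 0) and `b_n` (end at 1) obey `a_{n+1} = q c_n`, `b_{n+1} = p a_n`,
where `c_n = a_n + b_n = P{M_n ≤ 1}`; hence `c_{n+2} = q c_{n+1} + p q c_n` with `c_0 = c_1 = 1`,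
and `∑ λⁿ c_n = (1 + p λ) / (1 - q λ - p q λ²)`. Since `M_n = 0` only on the all-down path,
`P{M_n = 1} = c_n - qⁿ`, and subtracting the geometric series `∑ (q λ)ⁿ` gives the formula.
-/

open Finset Filter

/-- The value `±1` of a single step of the walk, driven by a Boolean. -/
def step (b : Bool) : ℤ := if b then 1 else -1

/-- The probability weight of the path `ω` when `P{Xᵢ = 1} = p`, `P{Xᵢ = -1} = 1 - p`,
independently over `i`. -/
def wt (p : ℝ) {n : ℕ} (ω : Fin n → Bool) : ℝ :=
  ∏ i, if ω i then p else 1 - p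

/-- The probability of an event `A` for a walk of length `n`. -/
noncomputable def prob (p : ℝ) {n : ℕ} (A : Set (Fin n → Bool)) : ℝ :=
  ∑ ω : Fin n → Bool, A.indicator (wt p) ω

/-- The walk weakly reflected at the origin: `S_0 = 0`, `S_{j+1} = max(S_j + X_{j+1}, 0)`. -/
def walkWeak {n : ℕ} (ω : Fin n → Bool) : ℕ → ℤ
  | 0 => 0
  | j + 1 => max (walkWeak ω j + if h : j < n then step (ω ⟨j, h⟩) else 0) 0

/-- The running maximum `M_n = max_{0 ≤ j ≤ n} S_j` of the weakly reflected walk. -/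
def mWeak {n : ℕ} (ω : Fin n → Bool) : ℤ :=
  (Finset.range (n + 1)).sup' (by simp) (walkWeak ω)

section Walk

variable {n : ℕ}

lemma step_true : step true = 1 := rfl

lemma step_false : step false = -1 := rfl

lemma walkWeak_nonneg (ω : Fin n → Bool) : ∀ j, 0 ≤ walkWeak ω j
  | 0 => le_rfl
  | _ + 1 => le_max_right _ _

lemma walkWeak_le_mWeak (ω : Fin n → Bool) {j : ℕ} (hj : j ≤ n) :
    walkWeak ω j ≤ mWeak ω :=
  Finset.le_sup' _ (Finset.mem_range.2 (Nat.lt_succ_of_le hj))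

lemma mWeak_nonneg (ω : Fin n → Bool) : 0 ≤ mWeak ω :=
  (walkWeak_nonneg ω 0).trans (walkWeak_le_mWeak ω n.zero_le)

lemma mWeak_of_fin_zero (ω : Fin 0 → Bool) : mWeak ω = 0 := rfl

lemma walkWeak_snoc (ω : Fin n → Bool) (b : Bool) :
    ∀ j ≤ n, walkWeak (Fin.snoc ω b : Fin (n + 1) → Bool) j = walkWeak ω j
  | 0, _ => rfl
  | j + 1, hj => by
    have hjn : j < n := hj
    simp only [walkWeak, walkWeak_snoc ω b j hjn.le, dif_pos hjn,
      dif_pos (hjn.trans n.lt_succ_self)]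
    congr
    simp [Fin.snoc, hjn]

lemma walkWeak_snoc_last (ω : Fin n → Bool) (b : Bool) :
    walkWeak (Fin.snoc ω b : Fin (n + 1) → Bool) (n + 1) = max (walkWeak ω n + step b) 0 := by
  simp only [walkWeak, walkWeak_snoc ω b n le_rfl, dif_pos n.lt_succ_self]
  congr
  exact Fin.snoc_last (α := fun _ => Bool) b ω

lemma mWeak_snoc (ω : Fin n → Bool) (b : Bool) :
    mWeak (Fin.snoc ω b : Fin (n + 1) → Bool)
      = max (mWeak ω) (max (walkWeak ω n + step b) 0) := by
  simp only [mWeak, Finset.range_add_one (n := n + 1)]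
  rw [Finset.sup'_insert (by simp), walkWeak_snoc_last, sup_comm]
  congr 1
  exact Finset.sup'_congr _ rfl fun j hj =>
    walkWeak_snoc ω b j (Nat.lt_succ_iff.mp (Finset.mem_range.mp hj))

end Walk

section Probability

variable {p : ℝ} {n : ℕ}

lemma wt_snoc (ω : Fin n → Bool) (b : Bool) :
    wt p (Fin.snoc ω b : Fin (n + 1) → Bool) = wt p ω * (if b then p else 1 - p) := by
  simp [wt, Fin.prod_univ_castSucc]

lemma wt_nonneg (hp0 : 0 ≤ p) (hp1 : p ≤ 1) (ω : Fin n → Bool) : 0 ≤ wt p ω :=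
  Finset.prod_nonneg fun _ _ => by split <;> linarith

lemma prob_empty : prob p (∅ : Set (Fin n → Bool)) = 0 := by
  simp [prob]

lemma prob_succ (A : Set (Fin (n + 1) → Bool)) :
    prob p A = (1 - p) * prob p {ω | Fin.snoc ω false ∈ A}
      + p * prob p {ω | Fin.snoc ω true ∈ A} := by
  have hsnoc (b : Bool) (ω : Fin n → Bool) : A.indicator (wt p) (Fin.snoc ω b) =
      (if b then p else 1 - p) * {ω | Fin.snoc ω b ∈ A}.indicator (wt p) ω := by
    classical
    simp only [Set.indicator_apply, Set.mem_ofPred_eq, wt_snoc]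
    split_ifs <;> ring
  rw [prob, ← (Fin.snocEquiv fun _ => Bool).sum_comp, Fintype.sum_prod_type_right, prob, prob,
    Finset.mul_sum, Finset.mul_sum, ← Finset.sum_add_distrib]
  refine Finset.sum_congr rfl fun ω _ => ?_
  rw [Fintype.sum_bool]
  exact (add_comm _ _).trans (congrArg₂ (· + ·) (hsnoc false ω) (hsnoc true ω))

lemma prob_union {A B : Set (Fin n → Bool)} (h : Disjoint A B) :
    prob p (A ∪ B) = prob p A + prob p B := by
  simp only [prob, Set.indicator_union_of_disjoint h, Finset.sum_add_distrib]

lemma prob_mono (hp0 : 0 ≤ p) (hp1 : p ≤ 1) {A B : Set (Fin n → Bool)} (h : A ⊆ B) :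
    prob p A ≤ prob p B :=
  Finset.sum_le_sum fun ω _ => Set.indicator_le_indicator_of_subset h (wt_nonneg hp0 hp1) ω

lemma prob_univ : ∀ n, prob p (Set.univ : Set (Fin n → Bool)) = 1
  | 0 => by simp [prob, wt]
  | n + 1 => by
    rw [prob_succ]
    simp only [Set.mem_univ, Set.ofPred_true, prob_univ n]
    ring

lemma prob_nonneg (hp0 : 0 ≤ p) (hp1 : p ≤ 1) (A : Set (Fin n → Bool)) : 0 ≤ prob p A :=
  Finset.sum_nonneg fun ω _ => Set.indicator_nonneg (fun ω _ => wt_nonneg hp0 hp1 ω) ω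

lemma prob_le_one (hp0 : 0 ≤ p) (hp1 : p ≤ 1) (A : Set (Fin n → Bool)) : prob p A ≤ 1 :=
  (prob_mono hp0 hp1 (Set.subset_univ A)).trans_eq (prob_univ n)

end Probability

section MaxLeOne

variable {p : ℝ}

noncomputable def probMaxLeOne (p : ℝ) (n : ℕ) : ℝ :=
  prob p {ω : Fin n → Bool | mWeak ω ≤ 1}

lemma probMaxLeOne_eq_add (n : ℕ) : probMaxLeOne p n =
    prob p {ω : Fin n → Bool | mWeak ω ≤ 1 ∧ walkWeak ω n = 0}
      + prob p {ω : Fin n → Bool | mWeak ω ≤ 1 ∧ walkWeak ω n = 1} := by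
  rw [probMaxLeOne, ← prob_union]
  · congr 1
    ext ω
    have := walkWeak_nonneg ω n
    have := walkWeak_le_mWeak ω le_rfl
    simp only [Set.mem_ofPred_eq, Set.mem_union]
    omega
  · exact Set.disjoint_left.2 fun ω h₀ h₁ => by simp_all

lemma prob_maxLeOne_endZero_succ (n : ℕ) :
    prob p {ω : Fin (n + 1) → Bool | mWeak ω ≤ 1 ∧ walkWeak ω (n + 1) = 0}
      = (1 - p) * probMaxLeOne p n := by
  rw [prob_succ, probMaxLeOne]
  convert congrArg₂ (fun x y => (1 - p) * prob p x + p * prob p y)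
    (show _ = {ω : Fin n → Bool | mWeak ω ≤ 1} from ?_) (show _ = ∅ from ?_) using 1
  · rw [prob_empty, mul_zero, add_zero]
  all_goals
    ext ω
    have := walkWeak_nonneg ω n
    have := walkWeak_le_mWeak ω le_rfl
    simp only [Set.mem_ofPred_eq, mWeak_snoc, walkWeak_snoc_last, step_true, step_false,
      Set.mem_empty_iff_false]
    grind

lemma prob_maxLeOne_endOne_succ (n : ℕ) :
    prob p {ω : Fin (n + 1) → Bool | mWeak ω ≤ 1 ∧ walkWeak ω (n + 1) = 1}
      = p * prob p {ω : Fin n → Bool | mWeak ω ≤ 1 ∧ walkWeak ω n = 0} := by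
  rw [prob_succ]
  convert congrArg₂ (fun x y => (1 - p) * prob p x + p * prob p y)
    (show _ = ∅ from ?_)
    (show _ = {ω : Fin n → Bool | mWeak ω ≤ 1 ∧ walkWeak ω n = 0} from ?_) using 1
  · rw [prob_empty, mul_zero, zero_add]
  all_goals
    ext ω
    have := walkWeak_nonneg ω n
    have := walkWeak_le_mWeak ω le_rfl
    simp only [Set.mem_ofPred_eq, mWeak_snoc, walkWeak_snoc_last, step_true, step_false,
      Set.mem_empty_iff_false]
    grind

lemma abs_probMaxLeOne_le_one (hp0 : 0 ≤ p) (hp1 : p ≤ 1) (n : ℕ) :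
    |probMaxLeOne p n| ≤ 1 :=
  abs_le.2 ⟨(neg_nonpos.2 zero_le_one).trans (prob_nonneg hp0 hp1 _), prob_le_one hp0 hp1 _⟩

lemma probMaxLeOne_zero : probMaxLeOne p 0 = 1 := by
  have hall : {ω : Fin 0 → Bool | mWeak ω ≤ 1} = Set.univ :=
    Set.eq_univ_of_forall fun ω => (mWeak_of_fin_zero ω).trans_le zero_le_one
  rw [probMaxLeOne, hall, prob_univ]

lemma probMaxLeOne_one : probMaxLeOne p 1 = 1 := by
  have hstart : {ω : Fin 0 → Bool | mWeak ω ≤ 1 ∧ walkWeak ω 0 = 0} = Set.univ :=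
    Set.eq_univ_of_forall fun ω => ⟨(mWeak_of_fin_zero ω).trans_le zero_le_one, rfl⟩
  rw [probMaxLeOne_eq_add, prob_maxLeOne_endZero_succ, prob_maxLeOne_endOne_succ, hstart,
    prob_univ, probMaxLeOne_zero]
  ring

lemma probMaxLeOne_add_two (n : ℕ) :
    probMaxLeOne p (n + 2) = (1 - p) * probMaxLeOne p (n + 1) + p * (1 - p) * probMaxLeOne p n := by
  rw [probMaxLeOne_eq_add, prob_maxLeOne_endZero_succ, prob_maxLeOne_endOne_succ,
    prob_maxLeOne_endZero_succ]
  ring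

lemma prob_mWeak_eq_zero : ∀ n, prob p {ω : Fin n → Bool | mWeak ω = 0} = (1 - p) ^ n
  | 0 => by
    have hall : {ω : Fin 0 → Bool | mWeak ω = 0} = Set.univ :=
      Set.eq_univ_of_forall mWeak_of_fin_zero
    rw [hall, prob_univ, pow_zero]
  | n + 1 => by
    rw [prob_succ]
    convert congrArg₂ (fun x y => (1 - p) * prob p x + p * prob p y)
      (show _ = {ω : Fin n → Bool | mWeak ω = 0} from ?_) (show _ = ∅ from ?_) using 1
    · rw [prob_mWeak_eq_zero n, prob_empty, pow_succ]
      ring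
    all_goals
      ext ω
      have := walkWeak_nonneg ω n
      have := walkWeak_le_mWeak ω le_rfl
      simp only [Set.mem_ofPred_eq, mWeak_snoc, step_true, step_false, Set.mem_empty_iff_false]
      grind

lemma prob_mWeak_eq_one (n : ℕ) :
    prob p {ω : Fin n → Bool | mWeak ω = 1} = probMaxLeOne p n - (1 - p) ^ n := by
  rw [← prob_mWeak_eq_zero n, probMaxLeOne, eq_sub_iff_add_eq', ← prob_union]
  · congr 1
    ext ω
    have := mWeak_nonneg ω
    simp only [Set.mem_ofPred_eq, Set.mem_union]
    omega
  · exact Set.disjoint_left.2 fun ω h₀ h₁ => by simp_all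

end MaxLeOne

section GeneratingFunction

variable {R : Type*} [CommRing R] [TopologicalSpace R] [IsTopologicalRing R] [T2Space R]

lemma HasSum.mul_eq_of_recurrence {c : ℕ → R} {α β l F : R}
    (hrec : ∀ n, c (n + 2) = α * c (n + 1) + β * c n) (hF : HasSum (fun n => l ^ n * c n) F) :
    F * (1 - α * l - β * l ^ 2) = c 0 + (c 1 - α * c 0) * l := by
  have h₁ := (hasSum_nat_add_iff' 1).2 hF
  have h₂ := (hasSum_nat_add_iff' 2).2 hF
  simp only [Finset.sum_range_succ, Finset.sum_range_zero] at h₁ h₂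
  have h₂' : HasSum (fun n => l ^ (n + 2) * c (n + 2))
      (α * l * (F - (0 + l ^ 0 * c 0)) + β * l ^ 2 * F) := by
    have hterm : (fun n => l ^ (n + 2) * c (n + 2))
        = fun n => α * l * (l ^ (n + 1) * c (n + 1)) + β * l ^ 2 * (l ^ n * c n) :=
      funext fun n => by rw [hrec]; ring
    rw [hterm]
    exact (h₁.mul_left (α * l)).add (hF.mul_left (β * l ^ 2))
  linear_combination h₂.unique h₂'

end GeneratingFunction

lemma summable_pow_mul_of_abs_le_one {c : ℕ → ℝ} {l : ℝ} (hc : ∀ n, |c n| ≤ 1)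
    (hl : |l| < 1) :
    Summable fun n => l ^ n * c n := by
  refine Summable.of_norm_bounded (summable_geometric_of_lt_one (abs_nonneg l) hl) fun n => ?_
  rw [Real.norm_eq_abs, abs_mul, abs_pow]
  exact mul_le_of_le_one_right (pow_nonneg (abs_nonneg l) n) (hc n)

lemma one_sub_mul_sub_mul_sq_pos {p l : ℝ} (hp0 : 0 ≤ p) (hp1 : p ≤ 1) (hl : |l| < 1) :
    0 < 1 - (1 - p) * l - p * (1 - p) * l ^ 2 := by
  have hlin : (1 - p) * l ≤ (1 - p) * |l| :=
    mul_le_mul_of_nonneg_left (le_abs_self l) (sub_nonneg.2 hp1)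
  have hsq : p * (1 - p) * l ^ 2 ≤ p * (1 - p) * |l| :=
    mul_le_mul_of_nonneg_left (by nlinarith [sq_abs l, abs_nonneg l])
      (mul_nonneg hp0 (sub_nonneg.2 hp1))
  -- the two bounds add up to `(1 - p²) |l| ≤ |l| < 1`
  nlinarith [mul_nonneg (sq_nonneg p) (abs_nonneg l)]

lemma hasSum_probMaxLeOne {p l : ℝ} (hp0 : 0 ≤ p) (hp1 : p ≤ 1) (hl : |l| < 1) :
    HasSum (fun n => l ^ n * probMaxLeOne p n)
      ((1 + p * l) / (1 - (1 - p) * l - p * (1 - p) * l ^ 2)) := by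
  obtain ⟨F, hF⟩ := summable_pow_mul_of_abs_le_one (abs_probMaxLeOne_le_one hp0 hp1) hl
  have hF_eq := hF.mul_eq_of_recurrence probMaxLeOne_add_two
  rw [probMaxLeOne_zero, probMaxLeOne_one] at hF_eq
  have hF_val : (1 + p * l) / (1 - (1 - p) * l - p * (1 - p) * l ^ 2) = F :=
    div_eq_of_eq_mul (one_sub_mul_sub_mul_sq_pos hp0 hp1 hl).ne' (by linear_combination -hF_eq)
  rwa [hF_val]

theorem statement11 (p : ℝ) (hp0 : 0 < p) (hp1 : p < 1) (l : ℝ) (hl : |l| < 1) :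
    HasSum (fun n : ℕ => l ^ (n + 1) * prob p {ω : Fin (n + 1) → Bool | mWeak ω = 1})
      (p * l / ((1 - (1 - p) * l) * (1 - (1 - p) * l - p * (1 - p) * l ^ 2))) := by
  have hD := one_sub_mul_sub_mul_sq_pos hp0.le hp1.le hl
  have hD₁ : 0 < 1 - (1 - p) * l := by nlinarith [mul_pos hp0 (sub_pos.2 hp1), sq_nonneg l]
  have hgeo : HasSum (fun n => ((1 - p) * l) ^ n) (1 - (1 - p) * l)⁻¹ := by
    refine hasSum_geometric_of_abs_lt_one ?_
    rw [abs_mul, abs_of_pos (sub_pos.2 hp1)]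
    nlinarith [abs_nonneg l]
  have hM : HasSum (fun n => l ^ n * prob p {ω : Fin n → Bool | mWeak ω = 1})
      ((1 + p * l) / (1 - (1 - p) * l - p * (1 - p) * l ^ 2) - (1 - (1 - p) * l)⁻¹) := by
    refine ((hasSum_probMaxLeOne hp0.le hp1.le hl).sub hgeo).congr_fun fun n => ?_
    rw [prob_mWeak_eq_one, mul_pow]
    ring
  have hM₀ : prob p {ω : Fin 0 → Bool | mWeak ω = 1} = 0 := by
    rw [prob_mWeak_eq_one, probMaxLeOne_zero, pow_zero, sub_self]
  have hvalue : p * l / ((1 - (1 - p) * l) * (1 - (1 - p) * l - p * (1 - p) * l ^ 2))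
      = (1 + p * l) / (1 - (1 - p) * l - p * (1 - p) * l ^ 2) - (1 - (1 - p) * l)⁻¹ := by
    rw [inv_eq_one_div, div_sub_div _ _ hD.ne' hD₁.ne',
      div_eq_div_iff (by positivity) (by positivity)]
    ring
  rw [hvalue]
  simpa only [Finset.sum_range_one, hM₀, mul_zero, sub_zero] using (hasSum_nat_add_iff' 1).2 hM
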